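/- arXiv:2309.04627 — 2 statements merged into one kernel-verified Lean document; each statement's English description precedes it below -/
import Mathlib

section
/- Let γ, γ₁, …, γₙ be i.i.d. real-valued random variables. For any integer r with 1 ≤ r ≤ n, the probability (over the draw of the n samples) that Pr{γ > max^(r)(γ₁,…,γₙ)} > ε is at most Bin(r-1; n, ε), where Bin is the binomial CDF. In particular, if Bin(r-1;n,ε) ≤ δ then with probability at least 1-δ over the samples, Pr{γ > max^(r)(γ₁,…,γₙ)} ≤ ε. -/
open Filter MeasureTheory

/-- Binomial cumulative distribution function Bin(k;n,ε). -/
noncomputable def binCDF (k n : ℕ) (ε : ℝ) : ℝ :=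
  ∑ i ∈ Finset.range (k + 1), (n.choose i : ℝ) * ε ^ i * (1 - ε) ^ (n - i)

/-- Generalized max: the r-th largest element of a list of reals (default 0). -/
noncomputable def rmaxL (r : ℕ) (l : List ℝ) : ℝ :=
  (l.insertionSort (· ≥ ·)).getD (r - 1) 0

/-! Take an upper ε-quantile q of W, i.e. W(γ > q) ≤ ε ≤ W(γ ≥ q). If the tail beyond the
r-th largest sample exceeds ε, that sample lies below q, so fewer than r samples are ≥ q.
The number of samples ≥ q is binomial with parameter p = W(γ ≥ q) ≥ ε, and Bin(r-1; n, p)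
decreases in p: it is the probability that fewer than r of n independent uniform points of
[0, 1] fall below p. -/

open Set
open scoped ENNReal Finset Topology

section Binomial

variable {ι α : Type*} [Fintype ι] {S : Set α} [DecidablePred (· ∈ S)]

lemma setOf_filter_mem_eq_pi [DecidableEq ι] (T : Finset ι) :
    {s : ι → α | ({i | s i ∈ S} : Finset ι) = T} =
      univ.pi fun i => if i ∈ T then S else Sᶜ := by
  ext s
  simp only [Finset.ext_iff, Finset.mem_filter_univ, mem_ofPred, mem_univ_pi]
  refine forall_congr' fun i => ?_
  by_cases hi : i ∈ T <;> simp [hi]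

lemma setOf_card_filter_mem_eq_biUnion (j : ℕ) :
    {s : ι → α | #{i | s i ∈ S} = j} =
      ⋃ T ∈ Finset.powersetCard j Finset.univ, {s | ({i | s i ∈ S} : Finset ι) = T} := by
  ext s
  simp

variable [MeasurableSpace α] {μ : Measure α}

lemma measurableSet_setOf_filter_mem_eq [DecidableEq ι] (hS : MeasurableSet S) (T : Finset ι) :
    MeasurableSet {s : ι → α | ({i | s i ∈ S} : Finset ι) = T} := by
  rw [setOf_filter_mem_eq_pi]
  exact .univ_pi fun i => by split_ifs; exacts [hS, hS.compl]

lemma measurableSet_setOf_card_filter_mem_eq (hS : MeasurableSet S) (j : ℕ) :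
    MeasurableSet {s : ι → α | #{i | s i ∈ S} = j} := by
  classical
  rw [setOf_card_filter_mem_eq_biUnion]
  exact Finset.measurableSet_biUnion _ fun T _ => measurableSet_setOf_filter_mem_eq hS T

lemma measure_pi_setOf_filter_mem_eq [SigmaFinite μ] [DecidableEq ι] (T : Finset ι) :
    Measure.pi (fun _ : ι => μ) {s | ({i | s i ∈ S} : Finset ι) = T} =
      μ S ^ #T * μ Sᶜ ^ (Fintype.card ι - #T) := by
  rw [setOf_filter_mem_eq_pi, Measure.pi_pi]
  simp only [apply_ite μ, Finset.prod_ite, Finset.prod_const, Finset.filter_mem_eq_inter,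
    Finset.univ_inter, Finset.filter_not]
  rw [Finset.card_sdiff_of_subset T.subset_univ, Finset.card_univ]

variable [IsProbabilityMeasure μ]

lemma measureReal_pi_card_filter_mem_eq (hS : MeasurableSet S) (j : ℕ) :
    (Measure.pi fun _ : ι => μ).real {s | #{i | s i ∈ S} = j} =
      (Fintype.card ι).choose j * μ.real S ^ j * (1 - μ.real S) ^ (Fintype.card ι - j) := by
  classical
  rw [setOf_card_filter_mem_eq_biUnion,
    measureReal_biUnion_finset _ fun T _ => measurableSet_setOf_filter_mem_eq hS T]
  · rw [Finset.sum_congr rfl fun T hT => ?_, Finset.sum_const, Finset.card_powersetCard,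
      Finset.card_univ, nsmul_eq_mul, mul_assoc]
    rw [measureReal_def, measure_pi_setOf_filter_mem_eq, Finset.mem_powersetCard_univ.1 hT,
      ENNReal.toReal_mul, ENNReal.toReal_pow, ENNReal.toReal_pow, ← measureReal_def,
      ← measureReal_def, probReal_compl_eq_one_sub hS]
  · intro T _ T' _ hTT'
    exact disjoint_left.2 fun s h h' => hTT' (h.symm.trans h')

lemma measureReal_pi_card_filter_mem_le (hS : MeasurableSet S) (k : ℕ) :
    (Measure.pi fun _ : ι => μ).real {s | #{i | s i ∈ S} ≤ k} =
      binCDF k (Fintype.card ι) (μ.real S) := by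
  have : {s : ι → α | #{i | s i ∈ S} ≤ k} =
      ⋃ j ∈ Finset.range (k + 1), {s | #{i | s i ∈ S} = j} := by
    ext s
    simp
  rw [this, measureReal_biUnion_finset _ fun j _ => measurableSet_setOf_card_filter_mem_eq hS j,
    binCDF]
  · simp only [measureReal_pi_card_filter_mem_eq hS]
  · intro j _ j' _ hjj'
    exact disjoint_left.2 fun s h h' => hjj' (h.symm.trans h')

end Binomial

lemma binCDF_antitoneOn (k n : ℕ) : AntitoneOn (binCDF k n) (Icc 0 1) := by
  intro p hp p' hp' hpp'
  let ν := volume.restrict (Icc (0 : ℝ) 1)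
  have : IsProbabilityMeasure ν := ⟨by simp [ν]⟩
  have hν {x : ℝ} (hx : x ∈ Icc (0 : ℝ) 1) : ν.real (Iio x) = x := by
    have : Iio x ∩ Icc 0 1 = Ico 0 x := by
      ext y
      simp only [mem_inter_iff, mem_Iio, mem_Icc, mem_Ico]
      exact ⟨fun h => ⟨h.2.1, h.1⟩, fun h => ⟨h.2, h.1, h.2.le.trans hx.2⟩⟩
    simp [ν, measureReal_def, Measure.restrict_apply measurableSet_Iio, this, hx.1]
  rw [← hν hp, ← hν hp', ← Fintype.card_fin n,
    ← measureReal_pi_card_filter_mem_le measurableSet_Iio,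
    ← measureReal_pi_card_filter_mem_le measurableSet_Iio]
  refine measureReal_mono fun s hs => (Finset.card_le_card ?_).trans hs
  exact Finset.monotone_filter_right Finset.univ fun i _ (hi : s i < p) => hi.trans_le hpp'

section Quantile

variable {μ : Measure ℝ}

lemma measure_Ioi_le_of_forall_gt {q : ℝ} {c : ℝ≥0∞} (h : ∀ x > q, μ (Ioi x) ≤ c) :
    μ (Ioi q) ≤ c := by
  obtain ⟨u, hu_anti, hu_gt, hu_lim⟩ := exists_seq_strictAnti_tendsto q
  have : Ioi q = ⋃ n, Ioi (u n) := by
    ext x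
    simp only [mem_Ioi, mem_iUnion]
    exact ⟨fun hx => (hu_lim.eventually (gt_mem_nhds hx)).exists,
      fun ⟨n, hn⟩ => (hu_gt n).trans hn⟩
  rw [this, Monotone.measure_iUnion fun m n hmn => Ioi_subset_Ioi (hu_anti.antitone hmn)]
  exact iSup_le fun n => h _ (hu_gt n)

lemma le_measure_Ici_of_forall_lt [IsFiniteMeasure μ] {q : ℝ} {c : ℝ≥0∞}
    (h : ∀ x < q, c ≤ μ (Ioi x)) : c ≤ μ (Ici q) := by
  obtain ⟨u, hu_mono, hu_lt, hu_lim⟩ := exists_seq_strictMono_tendsto q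
  have : Ici q = ⋂ n, Ioi (u n) := by
    ext x
    simp only [mem_Ici, mem_iInter, mem_Ioi]
    exact ⟨fun hx n => (hu_lt n).trans_le hx,
      fun hx => le_of_tendsto' hu_lim fun n => (hx n).le⟩
  rw [this, Antitone.measure_iInter (fun m n hmn => Ioi_subset_Ioi (hu_mono.monotone hmn))
    (fun n => measurableSet_Ioi.nullMeasurableSet) ⟨0, measure_ne_top _ _⟩]
  exact le_iInf fun n => h _ (hu_lt n)

theorem exists_measure_Ioi_le_le_measure_Ici [IsFiniteMeasure μ] {c : ℝ≥0∞} (hc0 : 0 < c)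
    (hc : c < μ univ) : ∃ q, μ (Ioi q) ≤ c ∧ c ≤ μ (Ici q) := by
  set L := {x | μ (Ioi x) ≤ c}
  have hL {x y : ℝ} (hxy : x ≤ y) (hx : x ∈ L) : y ∈ L :=
    (measure_mono (Ioi_subset_Ioi hxy)).trans hx
  have hatTop : Tendsto (fun x => μ (Ioi x)) atTop (𝓝 0) := by
    have h := tendsto_measure_iInter_atTop (μ := μ)
      (fun x => measurableSet_Ioi.nullMeasurableSet) antitone_Ioi ⟨0, measure_ne_top _ _⟩
    rwa [show ⋂ x : ℝ, Ioi x = ∅ from iInter_eq_empty_iff.2 fun x => ⟨x, lt_irrefl x⟩,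
      measure_empty] at h
  have hatBot : Tendsto (fun x => μ (Ioi x)) atBot (𝓝 (μ univ)) := by
    have h := tendsto_measure_iUnion_atBot (μ := μ) antitone_Ioi
    rwa [iUnion_Ioi] at h
  obtain ⟨a, ha⟩ : L.Nonempty :=
    (hatTop.eventually (gt_mem_nhds hc0)).exists.imp fun _ => le_of_lt
  obtain ⟨b, hb⟩ : ∃ b, c < μ (Ioi b) := (hatBot.eventually (lt_mem_nhds hc)).exists
  have hbdd : BddBelow L := ⟨b, fun x hx => le_of_not_gt fun hxb => not_lt.2 (hL hxb.le hx) hb⟩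
  refine ⟨sInf L, measure_Ioi_le_of_forall_gt fun x hx => ?_,
    le_measure_Ici_of_forall_lt fun x hx => ?_⟩
  · obtain ⟨l, hl, hlx⟩ := exists_lt_of_csInf_lt ⟨a, ha⟩ hx
    exact hL hlx.le hl
  · exact (not_le.1 fun hxL => not_lt.2 (csInf_le hbdd hxL) hx).le

end Quantile

lemma List.countP_ofFn {α : Type*} {n : ℕ} (s : Fin n → α) (p : α → Prop)
    [DecidablePred p] :
    (List.ofFn s).countP (p ·) = #{i | p (s i)} := by
  rw [← Multiset.coe_countP, ← Fin.univ_val_map, Multiset.countP_map]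
  rfl

lemma List.Pairwise.getElem_lt_iff_countP_le {α : Type*} [LinearOrder α] {l : List α}
    (hl : l.Pairwise (· ≥ ·)) {k : ℕ} (hk : k < l.length) (q : α) :
    l[k] < q ↔ l.countP (q ≤ ·) ≤ k := by
  induction l generalizing k with
  | nil => simp at hk
  | cons a t ih =>
    obtain ⟨ha, ht⟩ := List.pairwise_cons.1 hl
    have htq (haq : a < q) : t.countP (q ≤ ·) = 0 :=
      List.countP_eq_zero.2 fun b hb => by simpa using (ha b hb).trans_lt haq
    cases k with
    | zero =>
      by_cases haq : a < q <;> simp [List.countP_cons, haq, htq]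
    | succ k =>
      rw [List.getElem_cons_succ, ih ht (by simpa using hk), List.countP_cons]
      by_cases haq : a < q
      · simp [not_le.2 haq, htq haq]
      · simp [not_lt.1 haq]

lemma rmaxL_lt_iff {r : ℕ} {l : List ℝ} (hr : 1 ≤ r) (hrl : r ≤ l.length) (q : ℝ) :
    rmaxL r l < q ↔ l.countP (q ≤ ·) ≤ r - 1 := by
  have hk : r - 1 < (l.insertionSort (· ≥ ·)).length := by
    rw [List.length_insertionSort]
    omega
  rw [rmaxL, List.getD_eq_getElem _ _ hk,
    (List.pairwise_insertionSort _ _).getElem_lt_iff_countP_le hk,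
    (List.perm_insertionSort _ _).countP_eq]

lemma one_sub_measure_le_measure_compl {α : Type*} [MeasurableSpace α] (μ : Measure α)
    [IsProbabilityMeasure μ] (s : Set α) : 1 - μ s ≤ μ sᶜ := by
  rw [tsub_le_iff_left, ← measure_univ (μ := μ)]
  exact measure_univ_le_add_compl s

theorem probabilistic_scaling_general (W : Measure ℝ) [IsProbabilityMeasure W]
    (n r : ℕ) (hr1 : 1 ≤ r) (hrn : r ≤ n)
    (ε δ : ℝ) (hε : ε ∈ Set.Ioo (0 : ℝ) 1) :
    (Measure.pi fun _ : Fin n => W)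
        {s | W {γ : ℝ | γ > rmaxL r (List.ofFn s)} > ENNReal.ofReal ε}
      ≤ ENNReal.ofReal (binCDF (r - 1) n ε) ∧
    (binCDF (r - 1) n ε ≤ δ →
      (Measure.pi fun _ : Fin n => W)
          {s | W {γ : ℝ | γ > rmaxL r (List.ofFn s)} ≤ ENNReal.ofReal ε}
        ≥ 1 - ENNReal.ofReal δ) := by
  obtain ⟨q, hq_Ioi, hq_Ici⟩ := exists_measure_Ioi_le_le_measure_Ici (μ := W)
    (ENNReal.ofReal_pos.2 hε.1) (by simpa using ENNReal.ofReal_lt_one.2 hε.2)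
  set P := Measure.pi fun _ : Fin n => W
  set E := {s : Fin n → ℝ | W {γ : ℝ | γ > rmaxL r (List.ofFn s)} > ENNReal.ofReal ε}
  have hE : E ⊆ {s | #{i | s i ∈ Ici q} ≤ r - 1} := by
    intro s hs
    have hlt : rmaxL r (List.ofFn s) < q := by
      by_contra! hq
      exact (hs.trans_le ((measure_mono (Ioi_subset_Ioi hq)).trans hq_Ioi)).false
    simpa [List.countP_ofFn] using (rmaxL_lt_iff hr1 (by simpa using hrn) q).1 hlt
  have hp : ε ≤ W.real (Ici q) :=
    (ENNReal.ofReal_le_iff_le_toReal (measure_ne_top _ _)).1 hq_Ici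
  have hbound : P E ≤ ENNReal.ofReal (binCDF (r - 1) n ε) := calc
    _ ≤ P {s | #{i | s i ∈ Ici q} ≤ r - 1} := measure_mono hE
    _ = ENNReal.ofReal (binCDF (r - 1) n (W.real (Ici q))) := by
      rw [← ofReal_measureReal, measureReal_pi_card_filter_mem_le (measurableSet_Ici (a := q)),
        Fintype.card_fin]
    _ ≤ _ := ENNReal.ofReal_le_ofReal <| binCDF_antitoneOn _ _ ⟨hε.1.le, hε.2.le⟩
      ⟨hε.1.le.trans hp, measureReal_le_one⟩ hp
  refine ⟨hbound, fun hδ => ?_⟩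
  have hEc : {s : Fin n → ℝ | W {γ : ℝ | γ > rmaxL r (List.ofFn s)} ≤ ENNReal.ofReal ε} =
      Eᶜ := by
    ext s
    simp [E]
  rw [hEc]
  exact (tsub_le_tsub_left (hbound.trans (ENNReal.ofReal_le_ofReal hδ)) 1).trans
    (one_sub_measure_le_measure_compl P E)

/-- Probabilistic scaling (Property 1): for i.i.d. samples from W, the probability
that the tail beyond the r-th largest sample exceeds ε is at most Bin(r-1;n,ε);
hence if Bin(r-1;n,ε) ≤ δ, with probability at least 1-δ the tail is at most ε. -/
theorem probabilistic_scaling (W : Measure ℝ) [IsProbabilityMeasure W]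
    (n r : ℕ) (hr1 : 1 ≤ r) (hrn : r ≤ n)
    (ε δ : ℝ) (hε : ε ∈ Set.Ioo (0 : ℝ) 1) (hδ : δ ∈ Set.Ioo (0 : ℝ) 1) :
    (Measure.pi fun _ : Fin n => W)
        {s | W {γ : ℝ | γ > rmaxL r (List.ofFn s)} > ENNReal.ofReal ε}
      ≤ ENNReal.ofReal (binCDF (r - 1) n ε) ∧
    (binCDF (r - 1) n ε ≤ δ →
      (Measure.pi fun _ : Fin n => W)
          {s | W {γ : ℝ | γ > rmaxL r (List.ofFn s)} ≤ ENNReal.ofReal ε}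
        ≥ 1 - ENNReal.ofReal δ) :=
  probabilistic_scaling_general W n r hr1 hrn ε δ hε
end

section
/- Let β ∈ (0,1), ε ∈ (0,1), δ ∈ (0,1), and set κ = ((√β + √(2-β)) / (√2 (1-β)))². If n ≥ (κ/ε) ln(1/δ) and r = ⌈βεn⌉, then Bin(r-1; n, ε) ≤ δ. -/
/-- The sample-complexity constant κ of the explicit probabilistic-scaling bound. -/
noncomputable def kappa (β : ℝ) : ℝ :=
  ((Real.sqrt β + Real.sqrt (2 - β)) / (Real.sqrt 2 * (1 - β))) ^ 2

/-!
Chernoff's method: for `t ∈ (0,1]` every term of `Bin(k;n,ε)` with `i ≤ k` is at most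
`t^(i-k)` times itself, so `t^k Bin(k;n,ε) ≤ (1 - ε + tε)^n ≤ exp(-nε(1-t))`. Taking `t = β`
and `k ≤ βεn` gives `Bin(k;n,ε) ≤ exp(-nε (1 - β + β ln β))`. The constant `κ` is exactly
`1/(1 - s)` with `s = √(β(2-β))`, and `1 - s ≤ 1 - β + β ln β` reduces, with `β = e^{-u}`,
to `1 + u + u²/2 ≤ e^u`.
-/

open Finset Real

lemma Nat.cast_ceil_sub_one_le {R : Type*} [Semiring R] [LinearOrder R] [IsOrderedRing R]
    [FloorSemiring R] {x : R} (hx : 0 ≤ x) : ((⌈x⌉₊ - 1 : ℕ) : R) ≤ x := by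
  rcases Nat.eq_zero_or_pos ⌈x⌉₊ with h | h
  · simpa [h] using hx
  · exact (Nat.lt_ceil.mp (Nat.sub_one_lt_of_lt h)).le

lemma pow_mul_binCDF_le {k n : ℕ} {ε t : ℝ} (hk : k ≤ n) (hε0 : 0 ≤ ε) (hε1 : ε ≤ 1)
    (ht0 : 0 ≤ t) (ht1 : t ≤ 1) :
    t ^ k * binCDF k n ε ≤ (t * ε + (1 - ε)) ^ n := by
  have h1ε : 0 ≤ 1 - ε := by linarith
  rw [binCDF, add_pow, mul_sum]
  calc ∑ i ∈ range (k + 1), t ^ k * ((n.choose i : ℝ) * ε ^ i * (1 - ε) ^ (n - i))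
      ≤ ∑ i ∈ range (k + 1), (t * ε) ^ i * (1 - ε) ^ (n - i) * n.choose i := by
        refine sum_le_sum fun i hi => ?_
        have htk : t ^ k ≤ t ^ i :=
          pow_le_pow_of_le_one ht0 ht1 (Nat.lt_succ_iff.mp (mem_range.mp hi))
        calc t ^ k * ((n.choose i : ℝ) * ε ^ i * (1 - ε) ^ (n - i))
            ≤ t ^ i * ((n.choose i : ℝ) * ε ^ i * (1 - ε) ^ (n - i)) := by gcongr
          _ = (t * ε) ^ i * (1 - ε) ^ (n - i) * n.choose i := by ring
    _ ≤ ∑ i ∈ range (n + 1), (t * ε) ^ i * (1 - ε) ^ (n - i) * n.choose i :=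
        sum_le_sum_of_subset_of_nonneg (range_subset_range.mpr (by omega))
          fun i _ _ => by positivity

lemma pow_mul_add_one_sub_le_exp (n : ℕ) {ε t : ℝ} (hε0 : 0 ≤ ε) (hε1 : ε ≤ 1) (ht0 : 0 ≤ t) :
    (t * ε + (1 - ε)) ^ n ≤ exp (-(n * (ε * (1 - t)))) := by
  rw [← mul_neg, exp_nat_mul]
  have hbase : 0 ≤ t * ε + (1 - ε) := by nlinarith [mul_nonneg ht0 hε0]
  gcongr
  linarith [add_one_le_exp (-(ε * (1 - t)))]

theorem binCDF_le_exp {k n : ℕ} {ε t : ℝ} (hk : (k : ℝ) ≤ t * ε * n) (hε0 : 0 ≤ ε)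
    (hε1 : ε ≤ 1) (ht0 : 0 < t) (ht1 : t ≤ 1) :
    binCDF k n ε ≤ exp (-(ε * n * (1 - t + t * log t))) := by
  have hkn : k ≤ n := by
    have : t * ε ≤ 1 := mul_le_one₀ ht1 hε0 hε1
    exact_mod_cast (hk.trans (by nlinarith [(n.cast_nonneg : (0 : ℝ) ≤ n)]) : (k : ℝ) ≤ n)
  have hlog : log t ≤ 0 := log_nonpos ht0.le ht1
  have htk : t ^ k = exp (k * log t) := by rw [exp_nat_mul, exp_log ht0]
  have hchernoff := (pow_mul_binCDF_le hkn hε0 hε1 ht0.le ht1).trans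
    (pow_mul_add_one_sub_le_exp n hε0 hε1 ht0.le)
  rw [htk, ← le_div_iff₀' (exp_pos _), ← exp_sub] at hchernoff
  refine hchernoff.trans (exp_le_exp.mpr ?_)
  nlinarith [mul_le_mul_of_nonpos_right hk hlog]

lemma mul_one_sub_log_le_sqrt {β : ℝ} (h0 : 0 < β) (h1 : β ≤ 1) :
    β * (1 - log β) ≤ √(β * (2 - β)) := by
  set u := -log β
  have hu : 0 ≤ u := neg_nonneg.mpr (log_nonpos h0.le h1)
  have hβu : β * exp u = 1 := by rw [exp_neg, exp_log h0, mul_inv_cancel₀ h0.ne']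
  have hquad : β * (1 + u + u ^ 2 / 2) ≤ 1 :=
    (mul_le_mul_of_nonneg_left (quadratic_le_exp_of_nonneg hu) h0.le).trans_eq hβu
  rw [le_sqrt (by nlinarith) (by nlinarith)]
  nlinarith

lemma kappa_eq_one_add_sqrt_div {β : ℝ} (h0 : 0 ≤ β) (h2 : β ≤ 2) :
    kappa β = (1 + √(β * (2 - β))) / (1 - β) ^ 2 := by
  have hsq : (√β + √(2 - β)) ^ 2 = 2 * (1 + √(β * (2 - β))) := by
    rw [add_sq, sq_sqrt h0, sq_sqrt (by linarith), mul_assoc, ← sqrt_mul h0]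
    ring
  rw [kappa, div_pow, mul_pow, sq_sqrt zero_le_two, hsq, mul_div_mul_left _ _ two_ne_zero]

lemma one_le_kappa_mul {β : ℝ} (h0 : 0 < β) (h1 : β < 1) :
    1 ≤ kappa β * (1 - β + β * log β) := by
  set s := √(β * (2 - β))
  have hs2 : s ^ 2 = β * (2 - β) := sq_sqrt (by nlinarith)
  have hs1 : s < 1 := by nlinarith [sqrt_nonneg (β * (2 - β))]
  have hκ : kappa β = (1 - s)⁻¹ := by
    have hβs : (1 - β) ^ 2 = (1 + s) * (1 - s) := by nlinarith
    rw [kappa_eq_one_add_sqrt_div h0.le (by linarith), hβs, div_mul_cancel_left₀ (by positivity)]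
  have hsc : 1 - s ≤ 1 - β + β * log β := by linarith [mul_one_sub_log_le_sqrt h0 h1.le]
  rw [hκ, inv_mul_eq_div, one_le_div (by linarith)]
  exact hsc

/-- Explicit sample-complexity bound (Corollary 1): with r = ⌈βεn⌉ and
n ≥ (κ/ε) ln(1/δ), the binomial tail condition Bin(r-1;n,ε) ≤ δ holds. -/
theorem explicit_sample_complexity_bound
    (β ε δ : ℝ) (hβ : β ∈ Set.Ioo (0 : ℝ) 1) (hε : ε ∈ Set.Ioo (0 : ℝ) 1)
    (hδ : δ ∈ Set.Ioo (0 : ℝ) 1) (n : ℕ)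
    (hn : (n : ℝ) ≥ kappa β / ε * Real.log (1 / δ)) :
    binCDF (⌈β * ε * n⌉₊ - 1) n ε ≤ δ := by
  obtain ⟨hβ0, hβ1⟩ := hβ
  obtain ⟨hε0, hε1⟩ := hε
  obtain ⟨hδ0, hδ1⟩ := hδ
  set c := 1 - β + β * log β
  have hκc : 1 ≤ kappa β * c := one_le_kappa_mul hβ0 hβ1
  have hc : 0 ≤ c := (pos_of_mul_pos_right (one_pos.trans_le hκc) (sq_nonneg _)).le
  have hL : 0 ≤ log (1 / δ) := log_nonneg (one_le_one_div hδ0 hδ1.le)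
  have hκL : kappa β * log (1 / δ) ≤ ε * n := by
    rwa [ge_iff_le, div_mul_eq_mul_div, div_le_iff₀ hε0, mul_comm (n : ℝ)] at hn
  have hexponent : log (1 / δ) ≤ ε * n * c := by
    calc log (1 / δ) ≤ kappa β * c * log (1 / δ) := le_mul_of_one_le_left hL hκc
      _ = kappa β * log (1 / δ) * c := by ring
      _ ≤ ε * n * c := by gcongr
  calc binCDF (⌈β * ε * n⌉₊ - 1) n ε ≤ exp (-(ε * n * c)) :=
        binCDF_le_exp (Nat.cast_ceil_sub_one_le (by positivity)) hε0.le hε1.le hβ0 hβ1.le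
    _ ≤ exp (-log (1 / δ)) := exp_le_exp.mpr (neg_le_neg hexponent)
    _ = δ := by rw [one_div, log_inv, neg_neg, exp_log hδ0]
end
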